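/- Let P={312, 2431}. For α∈S_n(P), define d(α)=1 if the entry n plays the role of the largest value in an occurrence of the pattern 231 in α, and d(α)=0 otherwise. Then for every α∈S_n(P), site 1 of α is active; and if α∈S_n(P) has exactly k active sites and 1≤i≤k, then: (a) the number of active sites of α^{↓i} equals i+1 if i=1 or (i=k and d(α)=0), and equals i otherwise; (b) d(α^{↓i})=0 if i=1 or (i=k and d(α)=0), and d(α^{↓i})=1 otherwise. Hence P is a colored regular set of forbidden patterns with color function d and set of colors {0,1}. -/

import Mathlib

open Equiv

/-- The pattern `σ` (a length-`k` permutation) is contained in the length-`n`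
permutation `π` : some subsequence of `π` is order isomorphic to `σ`. -/
def Contains {k n : ℕ} (σ : Equiv.Perm (Fin k)) (π : Equiv.Perm (Fin n)) : Prop :=
  ∃ f : Fin k → Fin n, StrictMono f ∧ ∀ a b : Fin k, σ a < σ b ↔ π (f a) < π (f b)

/-- A set of forbidden patterns, of possibly different lengths. -/
abbrev PatternSet : Type := Set ((k : ℕ) × Equiv.Perm (Fin k))

/-- `π` avoids every pattern of `P`, i.e. `π ∈ S_n(P)`. -/
def AvoidsSet {n : ℕ} (π : Equiv.Perm (Fin n)) (P : PatternSet) : Prop :=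
  ∀ τ ∈ P, ¬ Contains τ.2 π

/-- The (0-indexed) position of the largest entry of `α`. -/
def maxPos {n : ℕ} (α : Equiv.Perm (Fin (n + 1))) : Fin (n + 1) := α⁻¹ (Fin.last n)

/-- `α^→` : transpose the largest entry with the entry immediately to its right
(meaningful when `maxPos α ≠ Fin.last n`, i.e. the largest entry is not last). -/
def moveRight {n : ℕ} (α : Equiv.Perm (Fin (n + 1))) : Equiv.Perm (Fin (n + 1)) :=
  α * Equiv.swap (maxPos α) (maxPos α + 1)

/-- `α^←` : transpose the largest entry with the entry immediately to its left
(meaningful when `maxPos α ≠ 0`, i.e. the largest entry is not first). -/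
def moveLeft {n : ℕ} (α : Equiv.Perm (Fin (n + 1))) : Equiv.Perm (Fin (n + 1)) :=
  α * Equiv.swap (maxPos α) (maxPos α - 1)

/-- `P` is right-justified : moving the largest entry of a `P`-avoiding permutation one
position to the right again yields a `P`-avoiding permutation. -/
def RightJustified (P : PatternSet) : Prop :=
  ∀ (n : ℕ) (α : Equiv.Perm (Fin (n + 1))),
    AvoidsSet α P → maxPos α ≠ Fin.last n → AvoidsSet (moveRight α) P

/-- `α^{↓i}` : insert the new largest entry into site `i` of `α`; the `n+1` sites of a
length-`n` permutation are numbered `1, …, n+1` from right to left, so the new largest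
entry lands at 0-indexed position `n - (i - 1)`. -/
def insertMax {n : ℕ} (α : Equiv.Perm (Fin n)) (i : ℕ) : Equiv.Perm (Fin (n + 1)) :=
  (finSuccEquivLast.permCongr.symm α.optionCongr) *
    (Fin.revPerm * Fin.cycleRange (Fin.rev (⟨n - (i - 1), by omega⟩ : Fin (n + 1))) *
      Fin.revPerm)

/-- Site `i` of `α ∈ S_n(P)` is active (with respect to `P`). -/
def ActiveSite {n : ℕ} (P : PatternSet) (α : Equiv.Perm (Fin n)) (i : ℕ) : Prop :=
  1 ≤ i ∧ i ≤ n + 1 ∧ AvoidsSet (insertMax α i) P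

/-- The number of active sites of `α` with respect to `P`. -/
noncomputable def numActive {n : ℕ} (P : PatternSet) (α : Equiv.Perm (Fin n)) : ℕ :=
  Set.ncard {i : ℕ | ActiveSite P α i}

/-- Delete the largest entry of a length-`(n+1)` permutation. -/
def deleteMax {n : ℕ} (π : Equiv.Perm (Fin (n + 1))) : Equiv.Perm (Fin n) :=
  Equiv.removeNone (finSuccEquivLast.permCongr
    (π * (Fin.revPerm * Fin.cycleRange (Fin.rev (maxPos π)) * Fin.revPerm)⁻¹))

/-- The pattern `321`. -/
def perm321 : Equiv.Perm (Fin 3) := ⟨![2, 1, 0], ![2, 1, 0], by decide, by decide⟩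
/-- The pattern `312`. -/
def perm312 : Equiv.Perm (Fin 3) := ⟨![2, 0, 1], ![1, 2, 0], by decide, by decide⟩
/-- The pattern `231`. -/
def perm231 : Equiv.Perm (Fin 3) := ⟨![1, 2, 0], ![2, 0, 1], by decide, by decide⟩
/-- The pattern `2431`. -/
def perm2431 : Equiv.Perm (Fin 4) := ⟨![1, 3, 2, 0], ![3, 0, 2, 1], by decide, by decide⟩
/-- The pattern `4321`. -/
def perm4321 : Equiv.Perm (Fin 4) := ⟨![3, 2, 1, 0], ![3, 2, 1, 0], by decide, by decide⟩

/-- The pattern `(m+1) 1 2 … m` of length `m + 1`. -/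
def sigmaM (m : ℕ) : Equiv.Perm (Fin (m + 1)) := (finRotate (m + 1))⁻¹

/-- The pattern `p (p+1) 1 2 … (p-1)` of length `p + 1`. -/
def sigmaP (p : ℕ) : Equiv.Perm (Fin (p + 1)) := ((finRotate (p + 1))⁻¹) ^ 2

/-- The largest entry of `α` plays the role of `3` in an occurrence of the pattern
`231` : there are positions `a < b < c` with `α b` largest, `α a < α b` and `α c < α a`. -/
def MaxIn231 {n : ℕ} (α : Equiv.Perm (Fin n)) : Prop :=
  ∃ a b c : Fin n, a < b ∧ b < c ∧ (∀ x, α x ≤ α b) ∧ α a < α b ∧ α c < α a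

/-- The last `p` entries of `α` are in decreasing order. -/
def LastDecreasing {n : ℕ} (α : Equiv.Perm (Fin n)) (p : ℕ) : Prop :=
  ∀ a b : Fin n, n - p ≤ (a : ℕ) → a < b → α b < α a

open Classical in
/-- The color `d(α)` : it is `1` iff the largest entry of `α` plays the role of `3` in an
occurrence of `231` and the length-`p` suffix of `α` is not decreasing; otherwise `0`. -/
noncomputable def colorD {n : ℕ} (p : ℕ) (α : Equiv.Perm (Fin n)) : ℕ :=
  if MaxIn231 α ∧ ¬ LastDecreasing α p then 1 else 0

open Classical in
/-- The color used for `P = {312, 2431}` : it is `1` iff the largest entry of `α` plays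
the role of `3` in an occurrence of `231`; otherwise `0`. -/
noncomputable def colorD2 {n : ℕ} (α : Equiv.Perm (Fin n)) : ℕ :=
  if MaxIn231 α then 1 else 0

/-! Inserting `n + 1` at site `i` of `α ∈ S_n(312, 2431)` creates a `312` or a `2431` through
the new entry exactly when the last `i - 1` entries of `α` (the tail) are not decreasing, or an
earlier entry (in the head) lies strictly between two tail entries. Both conditions pass to
smaller sites, so the active sites are `1, …, k`. For `β = α^{↓i}` the sites `1, …, i` stay
active, site `i + 2` never is, and site `i + 1` is active iff the whole head lies below the
tail, which is also exactly when `n + 1` is not the `3` of a `231` in `β`. Finally, the head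
lies below the tail at site `i ≤ k` iff `i = 1`, or `i = k` and `d(α) = 0`: for `1 < i < k`
the entries at positions `n - i` and `n - i + 1` form a descent across the cut, and at `i = k`
the largest entry of `α` is the first tail entry precisely when it is not the `3` of a `231`. -/

lemma Set.eq_Icc_one_ncard {S : Set ℕ} (hS : BddAbove S) (h0 : 0 ∉ S)
    (hdown : ∀ j ∈ S, ∀ j', 1 ≤ j' → j' ≤ j → j' ∈ S) : S = Set.Icc 1 S.ncard := by
  rcases S.eq_empty_or_nonempty with rfl | hne
  · simp
  have hS_eq : S = Set.Icc 1 (sSup S) := by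
    ext j
    refine ⟨fun hj => ⟨Nat.one_le_iff_ne_zero.2 (ne_of_mem_of_not_mem hj h0), le_csSup hS hj⟩,
      fun hj => hdown _ (Nat.sSup_mem hne hS) j hj.1 hj.2⟩
  rw [hS_eq, Set.ncard_Icc_nat, Nat.add_sub_cancel]

section InsertMax

variable {n : ℕ}

/-- The 0-indexed position at which `insertMax α i` places its largest entry. -/
def sitePos (n i : ℕ) : Fin (n + 1) := ⟨n - (i - 1), by omega⟩

@[simp]
lemma val_sitePos (n i : ℕ) : (sitePos n i : ℕ) = n - (i - 1) := rfl

@[simp]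
lemma insertMax_apply_sitePos (α : Perm (Fin n)) (i : ℕ) :
    insertMax α i (sitePos n i) = Fin.last n := by
  simp [insertMax, sitePos, Equiv.permCongr_apply]

@[simp]
lemma insertMax_apply_succAbove (α : Perm (Fin n)) (i : ℕ) (x : Fin n) :
    insertMax α i ((sitePos n i).succAbove x) = (α x).castSucc := by
  simp [insertMax, sitePos, Equiv.permCongr_apply, Fin.rev_succAbove, Fin.rev_succ]

lemma val_succAbove_sitePos (i : ℕ) (x : Fin n) :
    ((sitePos n i).succAbove x : ℕ) =
      if (x : ℕ) + i ≤ n then (x : ℕ) else (x : ℕ) + 1 := by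
  unfold Fin.succAbove
  split_ifs with h h' h' <;> simp [Fin.lt_def] at h ⊢ <;> omega

lemma Contains.insertMax {k : ℕ} {σ : Perm (Fin k)} {α : Perm (Fin n)} (h : Contains σ α)
    (i : ℕ) : Contains σ (insertMax α i) := by
  obtain ⟨f, hf, hσ⟩ := h
  refine ⟨(sitePos n i).succAbove ∘ f, (Fin.strictMono_succAbove _).comp hf, fun a b => ?_⟩
  simp [insertMax_apply_succAbove, hσ]

lemma contains_of_insertMax_of_ne_sitePos {k : ℕ} {σ : Perm (Fin k)} {α : Perm (Fin n)}
    {i : ℕ} {f : Fin k → Fin (n + 1)} (hf : StrictMono f)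
    (hσ : ∀ a b, σ a < σ b ↔ insertMax α i (f a) < insertMax α i (f b))
    (hne : ∀ t, f t ≠ sitePos n i) : Contains σ α := by
  choose g hg using fun t => Fin.exists_succAbove_eq (hne t)
  refine ⟨g, fun s t hst => ?_, fun a b => ?_⟩
  · rw [← Fin.succAbove_lt_succAbove_iff (p := sitePos n i), hg, hg]
    exact hf hst
  · rw [hσ, ← hg a, ← hg b, insertMax_apply_succAbove, insertMax_apply_succAbove,
      Fin.castSucc_lt_castSucc_iff]

lemma apply_le_of_insertMax_eq_sitePos {k : ℕ} {σ : Perm (Fin k)} {α : Perm (Fin n)}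
    {i : ℕ} {f : Fin k → Fin (n + 1)}
    (hσ : ∀ a b, σ a < σ b ↔ insertMax α i (f a) < insertMax α i (f b))
    {t : Fin k} (ht : f t = sitePos n i) (s : Fin k) : σ s ≤ σ t := by
  rw [← not_lt, hσ, ht, insertMax_apply_sitePos, not_lt]
  exact Fin.le_last _

lemma contains_perm312 {N : ℕ} {π : Perm (Fin N)} {u v w : Fin N} (huv : u < v) (hvw : v < w)
    (hvw' : π v < π w) (hwu : π w < π u) : Contains perm312 π := by
  refine ⟨![u, v, w], Fin.strictMono_iff_lt_succ.2 ?_, ?_⟩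
  · intro j; fin_cases j <;> simpa
  · intro a b
    fin_cases a <;> fin_cases b <;> simp [perm312] <;> omega

lemma contains_perm2431 {N : ℕ} {π : Perm (Fin N)} {u v w z : Fin N} (huv : u < v)
    (hvw : v < w) (hwz : w < z) (hzu : π z < π u) (huw : π u < π w) (hwv : π w < π v) :
    Contains perm2431 π := by
  refine ⟨![u, v, w, z], Fin.strictMono_iff_lt_succ.2 ?_, ?_⟩
  · intro j; fin_cases j <;> simpa
  · intro a b
    fin_cases a <;> fin_cases b <;> simp [perm2431] <;> omega

end InsertMax

def pat312_2431 : PatternSet := {⟨3, perm312⟩, ⟨4, perm2431⟩}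

lemma avoidsSet_pat312_2431_iff {N : ℕ} (π : Perm (Fin N)) :
    AvoidsSet π pat312_2431 ↔ ¬ Contains perm312 π ∧ ¬ Contains perm2431 π := by
  simp [AvoidsSet, pat312_2431]

section Sites

variable {n : ℕ}

/-! At site `i` the positions of a length-`n` permutation split into the *head*, the positions
`a` with `a + i ≤ n`, and the *tail*, the last `i - 1` positions `x` with `n + 1 ≤ x + i`;
`insertMax α i` puts its largest entry between the two. -/

def TailDecreasing (α : Perm (Fin n)) (i : ℕ) : Prop :=
  ∀ x y : Fin n, n + 1 ≤ (x : ℕ) + i → x < y → α y < α x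

def NoHeadBetweenTail (α : Perm (Fin n)) (i : ℕ) : Prop :=
  ∀ a x y : Fin n, (a : ℕ) + i ≤ n → n + 1 ≤ (x : ℕ) + i → x < y →
    ¬ (α y < α a ∧ α a < α x)

def HeadBelowTail (α : Perm (Fin n)) (i : ℕ) : Prop :=
  ∀ a y : Fin n, (a : ℕ) + i ≤ n → n + 1 ≤ (y : ℕ) + i → α a < α y

lemma sitePos_lt_succAbove_iff (i : ℕ) (x : Fin n) :
    sitePos n i < (sitePos n i).succAbove x ↔ n + 1 ≤ (x : ℕ) + i := by
  rw [Fin.lt_def, val_succAbove_sitePos, val_sitePos]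
  split_ifs <;> omega

lemma succAbove_lt_sitePos_iff (i : ℕ) (x : Fin n) :
    (sitePos n i).succAbove x < sitePos n i ↔ (x : ℕ) + i ≤ n := by
  rw [Fin.lt_def, val_succAbove_sitePos, val_sitePos]
  split_ifs <;> omega

lemma contains312_insertMax_iff (α : Perm (Fin n)) (i : ℕ) :
    Contains perm312 (insertMax α i) ↔ Contains perm312 α ∨ ¬ TailDecreasing α i := by
  set p := sitePos n i
  constructor
  · rintro ⟨f, hf, hσ⟩
    by_cases hmiss : ∀ t, f t ≠ p
    · exact Or.inl (contains_of_insertMax_of_ne_sitePos hf hσ hmiss)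
    obtain ⟨t, ht⟩ := not_forall_not.1 hmiss
    -- the new entry `n + 1` can only play the role of the pattern's largest entry
    have hmax : ∀ t : Fin 3, (∀ s, perm312 s ≤ perm312 t) → t = 0 := by decide
    obtain rfl := hmax t (apply_le_of_insertMax_eq_sitePos hσ ht)
    have hne : ∀ s, s ≠ 0 → f s ≠ p := fun s hs => ht ▸ hf.injective.ne hs
    obtain ⟨x, hx⟩ := Fin.exists_succAbove_eq (hne 1 (by decide))
    obtain ⟨y, hy⟩ := Fin.exists_succAbove_eq (hne 2 (by decide))
    have hpx : p < p.succAbove x := hx ▸ ht ▸ hf (show (0 : Fin 3) < 1 by decide)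
    have hxy : x < y := by
      rw [← Fin.succAbove_lt_succAbove_iff (p := p), hx, hy]
      exact hf (show (1 : Fin 3) < 2 by decide)
    have hαxy : α x < α y := by
      simpa [p, ← hx, ← hy] using (hσ 1 2).1 (by decide)
    exact Or.inr fun hdec =>
      (hdec x y ((sitePos_lt_succAbove_iff i x).1 hpx) hxy).not_gt hαxy
  · rintro (h | h)
    · exact Contains.insertMax h i
    · simp only [TailDecreasing, not_forall, not_lt] at h
      obtain ⟨x, y, hx, hxy, hαyx⟩ := h
      have hpx := (sitePos_lt_succAbove_iff i x).2 hx
      have hxy' : p.succAbove x < p.succAbove y := Fin.succAbove_lt_succAbove_iff.2 hxy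
      refine contains_perm312 hpx hxy' ?_ ?_
      · simpa [p] using lt_of_le_of_ne hαyx (α.injective.ne hxy.ne)
      · simp [p]

lemma contains2431_insertMax_iff (α : Perm (Fin n)) (i : ℕ) :
    Contains perm2431 (insertMax α i) ↔ Contains perm2431 α ∨ ¬ NoHeadBetweenTail α i := by
  set p := sitePos n i
  constructor
  · rintro ⟨f, hf, hσ⟩
    by_cases hmiss : ∀ t, f t ≠ p
    · exact Or.inl (contains_of_insertMax_of_ne_sitePos hf hσ hmiss)
    obtain ⟨t, ht⟩ := not_forall_not.1 hmiss
    have hmax : ∀ t : Fin 4, (∀ s, perm2431 s ≤ perm2431 t) → t = 1 := by decide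
    obtain rfl := hmax t (apply_le_of_insertMax_eq_sitePos hσ ht)
    have hne : ∀ s, s ≠ 1 → f s ≠ p := fun s hs => ht ▸ hf.injective.ne hs
    obtain ⟨a, ha⟩ := Fin.exists_succAbove_eq (hne 0 (by decide))
    obtain ⟨x, hx⟩ := Fin.exists_succAbove_eq (hne 2 (by decide))
    obtain ⟨y, hy⟩ := Fin.exists_succAbove_eq (hne 3 (by decide))
    have hap : p.succAbove a < p := ha ▸ ht ▸ hf (show (0 : Fin 4) < 1 by decide)
    have hpx : p < p.succAbove x := hx ▸ ht ▸ hf (show (1 : Fin 4) < 2 by decide)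
    have hxy : x < y := by
      rw [← Fin.succAbove_lt_succAbove_iff (p := p), hx, hy]
      exact hf (show (2 : Fin 4) < 3 by decide)
    have hαya : α y < α a := by simpa [p, ← ha, ← hy] using (hσ 3 0).1 (by decide)
    have hαax : α a < α x := by simpa [p, ← ha, ← hx] using (hσ 0 2).1 (by decide)
    exact Or.inr fun hnb => hnb a x y ((succAbove_lt_sitePos_iff i a).1 hap)
      ((sitePos_lt_succAbove_iff i x).1 hpx) hxy ⟨hαya, hαax⟩
  · rintro (h | h)
    · exact Contains.insertMax h i
    · simp only [NoHeadBetweenTail, not_forall, not_not] at h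
      obtain ⟨a, x, y, ha, hx, hxy, hαya, hαax⟩ := h
      refine contains_perm2431 ((succAbove_lt_sitePos_iff i a).2 ha)
        ((sitePos_lt_succAbove_iff i x).2 hx) (Fin.succAbove_lt_succAbove_iff.2 hxy)
        (by simpa [p] using hαya) (by simpa [p] using hαax) (by simp)

lemma TailDecreasing.mono {α : Perm (Fin n)} {i j : ℕ} (hd : TailDecreasing α i)
    (hji : j ≤ i) :
    TailDecreasing α j :=
  fun x y hx hxy => hd x y (by omega) hxy

lemma NoHeadBetweenTail.mono {α : Perm (Fin n)} {i j : ℕ} (hnb : NoHeadBetweenTail α i)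
    (hd : TailDecreasing α i) (hji : j ≤ i) : NoHeadBetweenTail α j := by
  rintro a x y ha hx hxy ⟨hya, hax⟩
  by_cases ha' : (a : ℕ) + i ≤ n
  · exact hnb a x y ha' (by omega) hxy ⟨hya, hax⟩
  · exact (hd a x (by omega) (Fin.lt_def.2 (by omega))).not_gt hax

section Active

variable {α : Perm (Fin n)}

lemma activeSite_iff (hα : AvoidsSet α pat312_2431) (j : ℕ) : ActiveSite pat312_2431 α j ↔
    1 ≤ j ∧ j ≤ n + 1 ∧ TailDecreasing α j ∧ NoHeadBetweenTail α j := by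
  rw [avoidsSet_pat312_2431_iff] at hα
  simp only [ActiveSite, avoidsSet_pat312_2431_iff, contains312_insertMax_iff,
    contains2431_insertMax_iff, hα, false_or, not_not]

lemma activeSite_one (hα : AvoidsSet α pat312_2431) : ActiveSite pat312_2431 α 1 :=
  (activeSite_iff hα 1).2 ⟨le_rfl, by omega, fun x y hx hxy => by omega,
    fun a x y ha hx hxy => by omega⟩

lemma activeSite_iff_le_numActive (hα : AvoidsSet α pat312_2431) (j : ℕ) :
    ActiveSite pat312_2431 α j ↔ 1 ≤ j ∧ j ≤ numActive pat312_2431 α := by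
  have hdown : ∀ j ∈ {j | ActiveSite pat312_2431 α j}, ∀ j', 1 ≤ j' → j' ≤ j →
      j' ∈ {j | ActiveSite pat312_2431 α j} := by
    intro j hj j' hj' hjj
    obtain ⟨-, hjn, hd, hnb⟩ := (activeSite_iff hα j).1 hj
    exact (activeSite_iff hα j').2 ⟨hj', by omega, hd.mono hjj, hnb.mono hd hjj⟩
  have := Set.eq_Icc_one_ncard ⟨n + 1, fun j hj => hj.2.1⟩ (fun h => by cases h.1) hdown
  exact Set.ext_iff.1 this j

lemma numActive_eq_of_activeSite (hα : AvoidsSet α pat312_2431) {K : ℕ}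
    (hK : ActiveSite pat312_2431 α K)
    (hK1 : ¬ ActiveSite pat312_2431 α (K + 1)) : numActive pat312_2431 α = K := by
  rw [activeSite_iff_le_numActive hα] at hK hK1
  omega

end Active

section Insertion

variable {α : Perm (Fin n)} {i : ℕ}

lemma TailDecreasing.insertMax_succ (hd : TailDecreasing α i) :
    TailDecreasing (insertMax α i) (i + 1) := by
  intro u v hu huv
  rcases Fin.eq_self_or_eq_succAbove (sitePos n i) v with rfl | ⟨y, rfl⟩
  · rw [Fin.lt_def, val_sitePos] at huv
    omega
  rcases Fin.eq_self_or_eq_succAbove (sitePos n i) u with rfl | ⟨x, rfl⟩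
  · simp
  have hx := val_succAbove_sitePos i x
  have hxy := Fin.succAbove_lt_succAbove_iff.1 huv
  simp only [insertMax_apply_succAbove, Fin.castSucc_lt_castSucc_iff]
  exact hd x y (by split_ifs at hx <;> omega) hxy

lemma not_tailDecreasing_insertMax_add_two (hi : 1 ≤ i) (hin : i ≤ n) :
    ¬ TailDecreasing (insertMax α i) (i + 2) := by
  intro hd
  have ha := (succAbove_lt_sitePos_iff i (⟨n - i, by omega⟩ : Fin n)).2 (by simp; omega)
  have := hd _ _ (by rw [val_succAbove_sitePos, if_pos (by simp; omega)]; simp; omega) ha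
  simp only [insertMax_apply_sitePos, insertMax_apply_succAbove] at this
  exact (Fin.le_last _).not_gt this

lemma NoHeadBetweenTail.insertMax (hnb : NoHeadBetweenTail α i) :
    NoHeadBetweenTail (insertMax α i) i := by
  rintro u v w hu hv hvw ⟨hwu, huv⟩
  rcases Fin.eq_self_or_eq_succAbove (sitePos n i) u with rfl | ⟨a, rfl⟩
  · exact (Fin.le_last _).not_gt (by simpa using huv)
  rcases Fin.eq_self_or_eq_succAbove (sitePos n i) v with rfl | ⟨x, rfl⟩
  · simp at hv; omega
  rcases Fin.eq_self_or_eq_succAbove (sitePos n i) w with rfl | ⟨y, rfl⟩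
  · rw [Fin.lt_def, val_sitePos] at hvw; omega
  have ha := val_succAbove_sitePos i a
  have hx := val_succAbove_sitePos i x
  simp only [insertMax_apply_succAbove, Fin.castSucc_lt_castSucc_iff] at hwu huv
  exact hnb a x y (by split_ifs at ha <;> omega) (by split_ifs at hx <;> omega)
    (Fin.succAbove_lt_succAbove_iff.1 hvw) ⟨hwu, huv⟩

lemma noHeadBetweenTail_insertMax_succ_iff :
    NoHeadBetweenTail (insertMax α i) (i + 1) ↔ HeadBelowTail α i := by
  constructor
  · intro hnb a y ha hy
    refine lt_of_not_ge fun hya => hnb ((sitePos n i).succAbove a) (sitePos n i)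
      ((sitePos n i).succAbove y) ?_ ?_
      ((sitePos_lt_succAbove_iff i y).2 hy) ⟨?_, by simp⟩
    · rw [val_succAbove_sitePos, if_pos ha]; omega
    · simp; omega
    · simpa using lt_of_le_of_ne hya (α.injective.ne fun h => by subst h; omega)
  · rintro hhb u v w hu hv hvw ⟨hwu, huv⟩
    rcases Fin.eq_self_or_eq_succAbove (sitePos n i) u with rfl | ⟨a, rfl⟩
    · exact (Fin.le_last _).not_gt (by simpa using huv)
    rcases Fin.eq_self_or_eq_succAbove (sitePos n i) w with rfl | ⟨y, rfl⟩
    · exact (Fin.le_last _).not_gt (by simpa using hwu)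
    have ha := val_succAbove_sitePos i a
    have hy := val_succAbove_sitePos i y
    have hvn : (sitePos n i : ℕ) ≤ v := by rw [val_sitePos]; omega
    simp only [insertMax_apply_succAbove, Fin.castSucc_lt_castSucc_iff] at hwu
    refine (hhb a y (by split_ifs at ha <;> omega) ?_).not_gt hwu
    rw [Fin.lt_def] at hvw
    split_ifs at hy <;> simp at hvn <;> omega

lemma maxIn231_insertMax_iff : MaxIn231 (insertMax α i) ↔ ¬ HeadBelowTail α i := by
  constructor
  · rintro ⟨u, v, w, huv, hvw, hmax, -, hwu⟩ hhb
    obtain rfl : v = sitePos n i := (insertMax α i).injective <|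
      le_antisymm (by rw [insertMax_apply_sitePos]; exact Fin.le_last _) (hmax _)
    obtain ⟨a, rfl⟩ := Fin.exists_succAbove_eq huv.ne
    obtain ⟨y, rfl⟩ := Fin.exists_succAbove_eq hvw.ne'
    simp only [insertMax_apply_succAbove, Fin.castSucc_lt_castSucc_iff] at hwu
    exact (hhb a y ((succAbove_lt_sitePos_iff i a).1 huv)
      ((sitePos_lt_succAbove_iff i y).1 hvw)).not_gt hwu
  · intro hhb
    simp only [HeadBelowTail, not_forall, not_lt] at hhb
    obtain ⟨a, y, ha, hy, hya⟩ := hhb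
    refine ⟨_, sitePos n i, _, (succAbove_lt_sitePos_iff i a).2 ha,
      (sitePos_lt_succAbove_iff i y).2 hy, fun x => by simp [Fin.le_last], by simp, ?_⟩
    simpa using lt_of_le_of_ne hya (α.injective.ne fun h => by subst h; omega)

end Insertion

section HeadBelowTail

variable {α : Perm (Fin n)}

lemma headBelowTail_one : HeadBelowTail α 1 :=
  fun a y _ hy => absurd y.isLt (by omega)

lemma not_headBelowTail_of_tailDecreasing_succ {i : ℕ} (hi : 2 ≤ i) (hin : i ≤ n)
    (hd : TailDecreasing α (i + 1)) : ¬ HeadBelowTail α i := fun hhb =>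
  (hd ⟨n - i, by omega⟩ ⟨n - i + 1, by omega⟩ (by simp; omega)
    (Fin.lt_def.2 (by simp))).not_gt
    (hhb _ _ (by simp; omega) (by simp; omega))

lemma not_headBelowTail_of_maxIn231 {i : ℕ} (hi : 2 ≤ i) (hd : TailDecreasing α i)
    (hmax : MaxIn231 α) : ¬ HeadBelowTail α i := by
  intro hhb
  obtain ⟨a, b, c, hab, hbc, hb, hab', hca⟩ := hmax
  rw [Fin.lt_def] at hab hbc
  by_cases hbh : (b : ℕ) + i ≤ n
  · exact (hb _).not_gt (hhb b ⟨n + 1 - i, by omega⟩ hbh (by simp; omega))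
  by_cases hah : (a : ℕ) + i ≤ n
  · exact (hhb a c hah (by omega)).not_gt hca
  · exact (hd a b (by omega) (Fin.lt_def.2 hab)).not_gt hab'

lemma apply_lt_apply_of_not_maxIn231 (h : ¬ MaxIn231 α) {m u v : Fin n}
    (hm : ∀ t, α t ≤ α m) (hum : u < m) (hmv : m < v) : α u < α v :=
  lt_of_not_ge fun hvu => h ⟨u, m, v, hum, hmv, hm,
    lt_of_le_of_ne (hm u) (α.injective.ne hum.ne),
    lt_of_le_of_ne hvu (α.injective.ne (hum.trans hmv).ne')⟩

lemma apply_lt_apply_of_not_contains312 (h : ¬ Contains perm312 α) {m x y : Fin n}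
    (hm : ∀ t, α t ≤ α m) (hmx : m < x) (hxy : x < y) : α y < α x :=
  lt_of_not_ge fun hxy' => h <| contains_perm312 hmx hxy
    (lt_of_le_of_ne hxy' (α.injective.ne hxy.ne))
    (lt_of_le_of_ne (hm y) (α.injective.ne (hmx.trans hxy).ne'))

lemma activeSite_of_add_le (hα : AvoidsSet α pat312_2431) (h231 : ¬ MaxIn231 α) {m : Fin n}
    (hm : ∀ t, α t ≤ α m) {j : ℕ} (hj : 1 ≤ j)
    (hmj : (m : ℕ) + j ≤ n + 1) : ActiveSite pat312_2431 α j := by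
  have h312 := ((avoidsSet_pat312_2431_iff α).1 hα).1
  have hdec : TailDecreasing α j := by
    intro x y hx hxy
    rcases (Fin.le_def.2 (by omega : (m : ℕ) ≤ x)).eq_or_lt with rfl | hmx
    · exact lt_of_le_of_ne (hm y) (α.injective.ne hxy.ne')
    · exact apply_lt_apply_of_not_contains312 h312 hm hmx hxy
  refine (activeSite_iff hα j).2 ⟨hj, by omega, hdec, ?_⟩
  rintro a x y ha hx hxy ⟨hya, hax⟩
  rcases lt_trichotomy a m with ham | rfl | ham
  · exact (apply_lt_apply_of_not_maxIn231 h231 hm ham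
      (Fin.lt_def.2 (by rw [Fin.lt_def] at hxy; omega))).not_gt hya
  · exact (hm x).not_gt hax
  · exact (apply_lt_apply_of_not_contains312 h312 hm ham (Fin.lt_def.2 (by omega))).not_gt hax

lemma headBelowTail_of_not_activeSite_succ (hα : AvoidsSet α pat312_2431) (h231 : ¬ MaxIn231 α)
    {k : ℕ} (hk : ActiveSite pat312_2431 α k)
    (hk1 : ¬ ActiveSite pat312_2431 α (k + 1)) : HeadBelowTail α k := by
  intro a y ha hy
  have : Nonempty (Fin n) := ⟨a⟩
  obtain ⟨m, hm⟩ := Finite.exists_max α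
  obtain ⟨hk1', -, hd, -⟩ := (activeSite_iff hα k).1 hk
  have hmk : n + 1 ≤ (m : ℕ) + k := by
    by_contra hmk
    exact hk1 (activeSite_of_add_le hα h231 hm (by omega) (by omega))
  have ham : a < m := Fin.lt_def.2 (by omega)
  rcases lt_trichotomy y m with hym | rfl | hym
  · exact absurd (hm y) (not_le.2 (hd y m (by omega) hym))
  · exact lt_of_le_of_ne (hm a) (α.injective.ne ham.ne)
  · exact apply_lt_apply_of_not_maxIn231 h231 hm ham hym

end HeadBelowTail

open Classical in
lemma colorD2_insertMax (α : Perm (Fin n)) (i : ℕ) :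
    colorD2 (insertMax α i) = if HeadBelowTail α i then 0 else 1 := by
  simp [colorD2, maxIn231_insertMax_iff, ite_not]

section Recurrence

variable {α : Perm (Fin n)}

open Classical in
lemma numActive_insertMax (hα : AvoidsSet α pat312_2431) {i : ℕ}
    (hi : ActiveSite pat312_2431 α i) :
    numActive pat312_2431 (insertMax α i) = if HeadBelowTail α i then i + 1 else i := by
  obtain ⟨hi1, hin, hd, hnb⟩ := (activeSite_iff hα i).1 hi
  have hβ := activeSite_iff hi.2.2
  split_ifs with hhb
  · refine numActive_eq_of_activeSite hi.2.2 ((hβ _).2 ⟨by omega, by omega, hd.insertMax_succ,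
      noHeadBetweenTail_insertMax_succ_iff.2 hhb⟩) fun h => ?_
    obtain ⟨-, hin', hd', -⟩ := (hβ _).1 h
    exact not_tailDecreasing_insertMax_add_two hi1 (by omega) hd'
  · exact numActive_eq_of_activeSite hi.2.2
      ((hβ _).2 ⟨hi1, by omega, hd.insertMax_succ.mono (by omega), hnb.insertMax⟩)
      fun h => hhb (noHeadBetweenTail_insertMax_succ_iff.1 ((hβ _).1 h).2.2.2)

lemma headBelowTail_iff (hα : AvoidsSet α pat312_2431) {i : ℕ} (hi : 1 ≤ i)
    (hik : i ≤ numActive pat312_2431 α) :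
    HeadBelowTail α i ↔ i = 1 ∨ (i = numActive pat312_2431 α ∧ ¬ MaxIn231 α) := by
  have hact := activeSite_iff_le_numActive hα
  constructor
  · intro hhb
    obtain ⟨-, -, hd, -⟩ := (activeSite_iff hα i).1 ((hact i).2 ⟨hi, hik⟩)
    rcases (show i = 1 ∨ 2 ≤ i by omega) with h1 | h2
    · exact Or.inl h1
    rcases hik.lt_or_eq with hlt | heq
    · obtain ⟨-, hin, hd', -⟩ :=
        (activeSite_iff hα (i + 1)).1 ((hact _).2 ⟨by omega, hlt⟩)
      exact absurd hhb (not_headBelowTail_of_tailDecreasing_succ h2 (by omega) hd')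
    · exact Or.inr ⟨heq, fun hmax => not_headBelowTail_of_maxIn231 h2 hd hmax hhb⟩
  · rintro (rfl | ⟨rfl, h231⟩)
    · exact headBelowTail_one
    · exact headBelowTail_of_not_activeSite_succ hα h231 ((hact _).2 ⟨hi, le_rfl⟩)
        fun h => by simpa using ((hact _).1 h).2

end Recurrence

end Sites

/-- For `P = {312, 2431}`, with the color `d(α) = 1` iff the largest
entry of `α` plays the role of `3` in an occurrence of `231` (`d(α) = 0` otherwise):
every `α ∈ S_n(P)` has its first site active, and if `α ∈ S_n(P)` has exactly `k`
active sites and `1 ≤ i ≤ k`, then (a) `α^{↓i}` has `i + 1` active sites if `i = 1` or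
(`i = k` and `d(α) = 0`), and `i` active sites otherwise; (b) `d(α^{↓i}) = 0` if
`i = 1` or (`i = k` and `d(α) = 0`), and `d(α^{↓i}) = 1` otherwise. Hence `P` is a
colored regular set of forbidden patterns with colors `{0, 1}`. -/
theorem cRegular_312_2431 (P : PatternSet)
    (hP : P = {⟨3, perm312⟩, ⟨4, perm2431⟩}) :
    (∀ (n : ℕ) (α : Equiv.Perm (Fin n)), AvoidsSet α P → ActiveSite P α 1) ∧
    (∀ (n : ℕ) (α : Equiv.Perm (Fin n)) (k i : ℕ), AvoidsSet α P →
      numActive P α = k → 1 ≤ i → i ≤ k →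
      (numActive P (insertMax α i) =
        if i = 1 ∨ (i = k ∧ colorD2 α = 0) then i + 1 else i) ∧
      (colorD2 (insertMax α i) =
        if i = 1 ∨ (i = k ∧ colorD2 α = 0) then 0 else 1)) := by
  obtain rfl : P = pat312_2431 := hP
  refine ⟨fun n α hα => activeSite_one hα, fun n α k i hα hk hi hik => ?_⟩
  subst hk
  have hcolor : colorD2 α = 0 ↔ ¬ MaxIn231 α := by simp [colorD2]
  have key := headBelowTail_iff hα hi hik
  rw [← hcolor] at key
  simp only [numActive_insertMax hα ((activeSite_iff_le_numActive hα i).2 ⟨hi, hik⟩),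
    colorD2_insertMax, key, and_self]
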